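/- The function p₀(t,x,y) = exp(-½(y - e^{tA}x)ᵀ G_t⁻¹ (y - e^{tA}x)) / (2π √det G_t), with A = [[0,0],[1,0]] and G_t = [[t, t²/2],[t²/2, t³/3]], satisfies the Kolmogorov equation in the x-variable: ∂_t p₀ = x₁ ∂_{x₂} p₀ + ½ ∂²_{x₁} p₀, for every fixed y ∈ ℝ² and t > 0. -/

import Mathlib

/-!
Since `A² = 0`, `e^{tA} x = (x₁, x₂ + t x₁)`, and inverting `G_t` gives, for `t > 0`,
`p₀ = (√3 / π) t⁻² exp Q_t(u, v)` with `(u, v) = y - e^{tA} x` and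
`Q_t(u, v) = -2u²/t + 6uv/t² - 6v²/t³`. Every derivative in the equation is then `p₀` times an
explicit rational function. The `x₁`-dependence of `v` makes `∂ₜ` produce the transport term
`x₁ ∂_{x₂}`, the factor `t⁻²` contributes `-2/t = ½ ∂²_{x₁} Q_t`, and what remains,
`∂ₜ Q_t = ½ (∂_{x₁} Q_t)²` at fixed `(u, v)`, is a polynomial identity in `u, v, t⁻¹`.
-/

open Matrix Real

noncomputable section

/-- The matrix `A = [[0,0],[1,0]]` of the Kolmogorov operator. -/
def A : Matrix (Fin 2) (Fin 2) ℝ := !![0, 0; 1, 0]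

/-- The covariance matrix `G_t = [[t, t²/2],[t²/2, t³/3]]`. -/
def G (t : ℝ) : Matrix (Fin 2) (Fin 2) ℝ := !![t, t^2/2; t^2/2, t^3/3]

/-- The explicit Gaussian fundamental solution of the Kolmogorov operator. -/
def p₀ (t : ℝ) (x y : Fin 2 → ℝ) : ℝ :=
  Real.exp (-(1/2) * ((y - NormedSpace.exp (t • A) *ᵥ x) ⬝ᵥ
      ((G t)⁻¹ *ᵥ (y - NormedSpace.exp (t • A) *ᵥ x)))) /
    (2 * π * Real.sqrt (G t).det)

/-- `p₀` as a function of time and the two coordinates of `x`, for fixed `y`. -/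
def P (y : Fin 2 → ℝ) (t x₁ x₂ : ℝ) : ℝ := p₀ t ![x₁, x₂] y

theorem NormedSpace.exp_eq_one_add_of_sq_eq_zero {𝔸 : Type*} [Ring 𝔸] [Algebra ℚ 𝔸]
    [TopologicalSpace 𝔸] [IsTopologicalRing 𝔸] {x : 𝔸} (hx : x ^ 2 = 0) :
    NormedSpace.exp x = 1 + x := by
  rw [NormedSpace.exp_eq_tsum_rat]
  beta_reduce
  rw [tsum_eq_sum (s := Finset.range 2)]
  · simp [Finset.sum_range_succ]
  · intro n hn
    rw [Finset.mem_range, not_lt] at hn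
    rw [← Nat.sub_add_cancel hn, pow_add, hx, mul_zero, smul_zero]

theorem exp_smul_A (t : ℝ) : NormedSpace.exp (t • A) = !![1, 0; t, 1] := by
  rw [NormedSpace.exp_eq_one_add_of_sq_eq_zero]
  · ext i j; fin_cases i <;> fin_cases j <;> simp [A]
  · have hA : A ^ 2 = 0 := by rw [A, sq, mul_fin_two]; ext i j; fin_cases i <;> fin_cases j <;> simp
    rw [smul_pow, hA, smul_zero]

theorem det_G (t : ℝ) : (G t).det = t ^ 4 / 12 := by
  rw [G, det_fin_two_of]; ring

theorem inv_G {t : ℝ} (ht : t ≠ 0) :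
    (G t)⁻¹ = !![4 / t, -6 / t ^ 2; -6 / t ^ 2, 12 / t ^ 3] := by
  refine inv_eq_right_inv ?_
  rw [G, mul_fin_two, one_fin_two]
  congr 1
  field_simp
  norm_num

def gaussExponent (t u v : ℝ) : ℝ := -2 * u ^ 2 / t + 6 * u * v / t ^ 2 - 6 * v ^ 2 / t ^ 3

theorem neg_half_dotProduct_inv_G {t : ℝ} (ht : t ≠ 0) (z : Fin 2 → ℝ) :
    -(1 / 2) * (z ⬝ᵥ ((G t)⁻¹ *ᵥ z)) = gaussExponent t (z 0) (z 1) := by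
  rw [inv_G ht, gaussExponent]
  simp [dotProduct, mulVec, Fin.sum_univ_two]
  ring

theorem sqrt_det_G {t : ℝ} (ht : 0 < t) : √(G t).det = t ^ 2 / (2 * √3) := by
  rw [det_G, sqrt_eq_iff_mul_self_eq_of_pos (by positivity)]
  field_simp
  rw [sq_sqrt (by norm_num)]
  ring

theorem HasDerivAt.gaussExponent {u v : ℝ → ℝ} {u' v' x : ℝ} (t : ℝ) (hu : HasDerivAt u u' x)
    (hv : HasDerivAt v v' x) :
    HasDerivAt (fun a => gaussExponent t (u a) (v a))
      (u' * (-4 * u x / t + 6 * v x / t ^ 2) + v' * (6 * u x / t ^ 2 - 12 * v x / t ^ 3)) x := by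
  have h := ((((hu.pow 2).const_mul (-2)).div_const t).add
    (((hu.const_mul 6).mul hv).div_const (t ^ 2))).sub (((hv.pow 2).const_mul 6).div_const (t ^ 3))
  refine h.congr_deriv ?_
  push_cast
  ring

theorem hasDerivAt_gaussExponent_time {t u : ℝ} {v : ℝ → ℝ} {v' : ℝ} (ht : t ≠ 0)
    (hv : HasDerivAt v v' t) :
    HasDerivAt (fun s => gaussExponent s u (v s))
      (2 * u ^ 2 / t ^ 2 - 12 * u * v t / t ^ 3 + 18 * v t ^ 2 / t ^ 4
        + v' * (6 * u / t ^ 2 - 12 * v t / t ^ 3)) t := by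
  have h := (((hasDerivAt_const t (-2 * u ^ 2)).div (hasDerivAt_id t) ht).add
    ((hv.const_mul (6 * u)).div (hasDerivAt_pow 2 t) (pow_ne_zero 2 ht))).sub
    (((hv.pow 2).const_mul 6).div (hasDerivAt_pow 3 t) (pow_ne_zero 3 ht))
  refine h.congr_deriv ?_
  simp only [id, Pi.pow_apply]
  push_cast
  field_simp
  ring

section

variable (y : Fin 2 → ℝ) {t : ℝ}

theorem P_eq (ht : 0 < t) (x₁ x₂ : ℝ) :
    P y t x₁ x₂ = √3 / π * exp (gaussExponent t (y 0 - x₁) (y 1 - x₂ - t * x₁)) / t ^ 2 := by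
  rw [P, p₀, neg_half_dotProduct_inv_G ht.ne', sqrt_det_G ht, exp_smul_A]
  have hz : y - !![1, 0; t, 1] *ᵥ ![x₁, x₂] = ![y 0 - x₁, y 1 - x₂ - t * x₁] := by
    ext i; fin_cases i <;> simp; ring
  rw [hz, cons_val_zero, cons_val_one, cons_val_zero]
  field_simp

theorem hasDerivAt_P_time (ht : 0 < t) (x₁ x₂ : ℝ) :
    HasDerivAt (fun s => P y s x₁ x₂)
      (P y t x₁ x₂ * (2 * (y 0 - x₁) ^ 2 / t ^ 2 - 12 * (y 0 - x₁) * (y 1 - x₂ - t * x₁) / t ^ 3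
        + 18 * (y 1 - x₂ - t * x₁) ^ 2 / t ^ 4
        - x₁ * (6 * (y 0 - x₁) / t ^ 2 - 12 * (y 1 - x₂ - t * x₁) / t ^ 3) - 2 / t)) t := by
  have hv : HasDerivAt (fun s => y 1 - x₂ - s * x₁) (-x₁) t := by
    simpa using ((hasDerivAt_id t).mul_const x₁).const_sub (y 1 - x₂)
  have h := (((hasDerivAt_gaussExponent_time (u := y 0 - x₁) ht.ne' hv).exp.const_mul (√3 / π)).div
    (hasDerivAt_pow 2 t) (pow_ne_zero 2 ht.ne'))
  rw [P_eq y ht]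
  refine (h.congr_of_eventuallyEq ?_).congr_deriv ?_
  · filter_upwards [eventually_gt_nhds ht] with s hs using P_eq y hs x₁ x₂
  · push_cast
    field_simp
    ring

theorem hasDerivAt_P_x₂ (ht : 0 < t) (x₁ x₂ : ℝ) :
    HasDerivAt (fun b => P y t x₁ b)
      (P y t x₁ x₂ * (-6 * (y 0 - x₁) / t ^ 2 + 12 * (y 1 - x₂ - t * x₁) / t ^ 3)) x₂ := by
  have hv : HasDerivAt (fun b => y 1 - b - t * x₁) (-1) x₂ :=
    ((hasDerivAt_id x₂).const_sub (y 1)).sub_const (t * x₁)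
  have h := (((hasDerivAt_const x₂ (y 0 - x₁)).gaussExponent t hv).exp.const_mul (√3 / π)).div_const
    (t ^ 2)
  simp only [P_eq y ht]
  refine h.congr_deriv ?_
  ring

theorem hasDerivAt_P_x₁ (ht : 0 < t) (x₁ x₂ : ℝ) :
    HasDerivAt (fun a => P y t a x₂)
      (P y t x₁ x₂ * (-2 * (y 0 - x₁) / t + 6 * (y 1 - x₂ - t * x₁) / t ^ 2)) x₁ := by
  have hu : HasDerivAt (fun a => y 0 - a) (-1) x₁ := (hasDerivAt_id x₁).const_sub (y 0)
  have hv : HasDerivAt (fun a => y 1 - x₂ - t * a) (-t) x₁ := by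
    simpa using ((hasDerivAt_id x₁).const_mul t).const_sub (y 1 - x₂)
  have h := ((hu.gaussExponent t hv).exp.const_mul (√3 / π)).div_const (t ^ 2)
  simp only [P_eq y ht]
  refine h.congr_deriv ?_
  field_simp
  ring

theorem hasDerivAt_deriv_P_x₁ (ht : 0 < t) (x₁ x₂ : ℝ) :
    HasDerivAt (deriv fun a => P y t a x₂)
      (P y t x₁ x₂ * ((-2 * (y 0 - x₁) / t + 6 * (y 1 - x₂ - t * x₁) / t ^ 2) ^ 2 - 4 / t)) x₁ := by
  have hg : HasDerivAt (fun a => -2 * (y 0 - a) / t + 6 * (y 1 - x₂ - t * a) / t ^ 2)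
      (-4 / t) x₁ := by
    have h := ((((hasDerivAt_id x₁).const_sub (y 0)).const_mul (-2)).div_const t).add
      (((((hasDerivAt_id x₁).const_mul t).const_sub (y 1 - x₂)).const_mul 6).div_const (t ^ 2))
    refine h.congr_deriv ?_
    field_simp
    ring
  rw [funext fun a => (hasDerivAt_P_x₁ y ht a x₂).deriv]
  refine ((hasDerivAt_P_x₁ y ht x₁ x₂).mul hg).congr_deriv ?_
  ring

end

/-- The Kolmogorov kernel satisfies `∂ₜ p₀ = x₁ ∂_{x₂} p₀ + ½ ∂²_{x₁} p₀` in the `x`-variable. -/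
theorem stmt_2 (y : Fin 2 → ℝ) (t : ℝ) (ht : 0 < t) (x₁ x₂ : ℝ) :
    deriv (fun s => P y s x₁ x₂) t =
      x₁ * deriv (fun b => P y t x₁ b) x₂ +
        (1/2) * deriv (fun a => deriv (fun a' => P y t a' x₂) a) x₁ := by
  rw [(hasDerivAt_P_time y ht x₁ x₂).deriv, (hasDerivAt_P_x₂ y ht x₁ x₂).deriv,
    (hasDerivAt_deriv_P_x₁ y ht x₁ x₂).deriv]
  ring
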